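/- Let Q be an N×N real symmetric matrix, let e₁ ∈ ℝ^N be a unit vector with Qe₁ = μe₁ for some μ ∈ ℝ, and suppose there is q ≥ 0 with ‖Qv‖ ≤ q‖v‖ for every v ∈ ℝ^N orthogonal to e₁. Let M = {e₁yᵀ : y ∈ ℝ^m} ⊆ ℝ^{N×m}. Then for every F ∈ ℝ^{N×m}, d_M(QF) ≤ q · d_M(F), where d_M(X) := inf{‖X − Y‖_F : Y ∈ M}. -/

import Mathlib

open scoped RealInnerProductSpace
open Finset Matrix

/-- A feature matrix `F ∈ ℝ^{N×m}` viewed as a point of the Euclidean (Frobenius)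
norm space `ℝ^{N×m}`. -/
abbrev FeatureSpace (N m : ℕ) := EuclideanSpace ℝ (Fin N × Fin m)

/-- Left multiplication of a feature matrix by an `N×N` matrix, i.e. `F ↦ QF`. -/
noncomputable def matAct {N m : ℕ} (Q : Matrix (Fin N) (Fin N) ℝ)
    (F : FeatureSpace N m) : FeatureSpace N m :=
  WithLp.toLp 2 (fun p => ∑ j, Q p.1 j * F (j, p.2))

/-- Multiplication of a vector by an `N×N` matrix, i.e. `v ↦ Qv`. -/
noncomputable def matVec {N : ℕ} (Q : Matrix (Fin N) (Fin N) ℝ)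
    (v : EuclideanSpace ℝ (Fin N)) : EuclideanSpace ℝ (Fin N) :=
  WithLp.toLp 2 (fun i => ∑ j, Q i j * v j)

/-- **Abstract contraction lemma for message passing.**
If `Q` is symmetric with `Qe₁ = μe₁` for a unit vector `e₁`, and `‖Qv‖ ≤ q‖v‖` for all
`v ⊥ e₁`, then `d_M(QF) ≤ q·d_M(F)` where `M = {e₁yᵀ : y ∈ ℝ^m}`. -/
theorem message_passing_contracts_distance
    (N m : ℕ)
    (Q : Matrix (Fin N) (Fin N) ℝ) (hsym : Q.IsSymm)
    (e₁ : EuclideanSpace ℝ (Fin N)) (he₁ : ‖e₁‖ = 1)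
    (μ : ℝ) (heig : matVec Q e₁ = μ • e₁)
    (q : ℝ) (hq : 0 ≤ q)
    (hop : ∀ v : EuclideanSpace ℝ (Fin N), ⟪v, e₁⟫ = 0 → ‖matVec Q v‖ ≤ q * ‖v‖)
    (M : Set (FeatureSpace N m))
    (hM : M = {G : FeatureSpace N m | ∃ y : Fin m → ℝ, ∀ p, G p = e₁ p.1 * y p.2})
    (F : FeatureSpace N m) :
    Metric.infDist (matAct Q F) M ≤ q * Metric.infDist F M := by
  classical
  have he2 : ∑ i, e₁ i * e₁ i = 1 := by
    have h : ‖e₁‖ ^ 2 = ∑ i, e₁ i ^ 2 := by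
      rw [EuclideanSpace.norm_eq, Real.sq_sqrt (by positivity)]
      simp [sq_abs]
    rw [he₁, one_pow] at h
    simp only [← sq]; linarith
  set y : Fin m → ℝ := fun j => ∑ i, F (i, j) * e₁ i with hy
  set Y : FeatureSpace N m := WithLp.toLp 2 (fun p => e₁ p.1 * y p.2 : Fin N × Fin m → ℝ) with hYdef
  have hYmem : Y ∈ M := by rw [hM]; exact ⟨y, fun p => rfl⟩
  have hMne : M.Nonempty := ⟨Y, hYmem⟩
  -- columns of F - Y are orthogonal to e₁
  have hcol : ∀ j : Fin m, ∑ i, (F (i, j) - e₁ i * y j) * e₁ i = 0 := by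
    intro j
    have hterm : ∀ i, (F (i, j) - e₁ i * y j) * e₁ i
        = F (i, j) * e₁ i - (e₁ i * e₁ i) * y j := fun i => by ring
    simp_rw [hterm]
    rw [Finset.sum_sub_distrib, ← Finset.sum_mul, he2]
    simp [hy]
  -- orthogonality of F - Y to all of M (in coefficient form)
  have horth : ∀ z : Fin m → ℝ,
      ∑ p : Fin N × Fin m, (F p - Y p) * (e₁ p.1 * z p.2) = 0 := by
    intro z
    rw [Fintype.sum_prod_type_right]
    refine Finset.sum_eq_zero fun j _ => ?_
    have h1 : ∑ i, (F (i, j) - Y (i, j)) * (e₁ i * z j)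
        = (∑ i, (F (i, j) - e₁ i * y j) * e₁ i) * z j := by
      rw [Finset.sum_mul]
      refine Finset.sum_congr rfl fun i _ => ?_
      simp only [hYdef]; ring
    rw [h1, hcol j, zero_mul]
  -- infDist F M = ‖F - Y‖
  have hFY_le : ∀ G ∈ M, ‖F - Y‖ ≤ dist F G := by
    intro G hG
    rw [hM] at hG
    obtain ⟨z, hz⟩ := hG
    have hsplit : F - G = (F - Y) + (Y - G) := by abel
    have hinner : ⟪F - Y, Y - G⟫ = 0 := by
      rw [PiLp.inner_apply]
      simp only [RCLike.inner_apply, conj_trivial]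
      calc ∑ p : Fin N × Fin m, (Y - G) p * (F - Y) p
          = ∑ p : Fin N × Fin m, (F p - Y p) * (e₁ p.1 * (y p.2 - z p.2)) := by
            refine Finset.sum_congr rfl fun p _ => ?_
            have h2 : (Y - G) p = e₁ p.1 * (y p.2 - z p.2) := by
              have := hz p
              simp only [PiLp.sub_apply, this, hYdef]
              ring
            have h3 : (F - Y) p = F p - Y p := by simp
            rw [h2, h3]; ring
        _ = 0 := by simpa using horth (fun j => y j - z j)
    have hsq : ‖F - G‖ ^ 2 = ‖F - Y‖ ^ 2 + ‖Y - G‖ ^ 2 := by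
      rw [hsplit, norm_add_sq_real, hinner]; ring
    rw [dist_eq_norm]
    nlinarith [norm_nonneg (F - G), norm_nonneg (F - Y), sq_nonneg ‖Y - G‖]
  have hdist_eq : Metric.infDist F M = ‖F - Y‖ := by
    refine le_antisymm ?_ ?_
    · calc Metric.infDist F M ≤ dist F Y := Metric.infDist_le_dist_of_mem hYmem
        _ = ‖F - Y‖ := dist_eq_norm _ _
    · by_contra hlt
      push_neg at hlt
      obtain ⟨G, hG, hGd⟩ := (Metric.infDist_lt_iff hMne).1 hlt
      exact absurd hGd (not_lt.2 (hFY_le G hG))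
  -- matAct Q Y ∈ M
  have hQY : matAct Q Y = WithLp.toLp 2 (fun p => e₁ p.1 * (μ * y p.2) : Fin N × Fin m → ℝ) := by
    ext p
    have h1 : (∑ k, Q p.1 k * e₁ k) = μ * e₁ p.1 := by
      have : (matVec Q e₁) p.1 = (μ • e₁) p.1 := by rw [heig]
      simpa [matVec] using this
    calc (matAct Q Y) p = (∑ k, Q p.1 k * e₁ k) * y p.2 := by
          simp only [matAct, hYdef]
          rw [Finset.sum_mul]
          exact Finset.sum_congr rfl fun k _ => by ring
      _ = e₁ p.1 * (μ * y p.2) := by rw [h1]; ring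
  have hQYmem : matAct Q Y ∈ M := by
    rw [hM]; exact ⟨fun j => μ * y j, fun p => by simp [hQY]⟩
  -- linearity
  have hlin : matAct Q F - matAct Q Y = matAct Q (F - Y) := by
    ext p
    have h0 : (matAct Q F - matAct Q Y) p = (matAct Q F) p - (matAct Q Y) p := by simp
    rw [h0]
    simp only [matAct, ← Finset.sum_sub_distrib]
    refine Finset.sum_congr rfl fun k _ => ?_
    have h1 : (F - Y) (k, p.2) = F (k, p.2) - Y (k, p.2) := by simp
    rw [h1]; ring
  -- column-wise operator bound
  have hbound : ‖matAct Q (F - Y)‖ ≤ q * ‖F - Y‖ := by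
    set D : FeatureSpace N m := F - Y with hD
    set Dcol : Fin m → EuclideanSpace ℝ (Fin N) := fun j => WithLp.toLp 2 (fun i => D (i, j)) with hDcol
    have hnorm2 : ∀ (X : FeatureSpace N m), ‖X‖ ^ 2 = ∑ p : Fin N × Fin m, (X p) ^ 2 := by
      intro X
      rw [EuclideanSpace.norm_eq, Real.sq_sqrt (by positivity)]
      simp [sq_abs]
    have hvnorm2 : ∀ (v : EuclideanSpace ℝ (Fin N)), ‖v‖ ^ 2 = ∑ i, (v i) ^ 2 := by
      intro v
      rw [EuclideanSpace.norm_eq, Real.sq_sqrt (by positivity)]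
      simp [sq_abs]
    have hsq : ‖matAct Q D‖ ^ 2 ≤ (q * ‖D‖) ^ 2 := by
      have lhs : ‖matAct Q D‖ ^ 2 = ∑ j : Fin m, ‖matVec Q (Dcol j)‖ ^ 2 := by
        rw [hnorm2, Fintype.sum_prod_type_right]
        refine Finset.sum_congr rfl fun j _ => ?_
        rw [hvnorm2]
        exact Finset.sum_congr rfl fun i _ => by simp [matAct, matVec, hDcol]
      have rhs : ‖D‖ ^ 2 = ∑ j : Fin m, ‖Dcol j‖ ^ 2 := by
        rw [hnorm2, Fintype.sum_prod_type_right]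
        exact Finset.sum_congr rfl fun j _ => (hvnorm2 (Dcol j)).symm
      rw [lhs, mul_pow, rhs, Finset.mul_sum]
      refine Finset.sum_le_sum fun j _ => ?_
      have horthcol : ⟪Dcol j, e₁⟫ = 0 := by
        rw [PiLp.inner_apply]
        simp only [RCLike.inner_apply, conj_trivial]
        calc (∑ i, e₁ i * Dcol j i) = ∑ i, (F (i, j) - e₁ i * y j) * e₁ i := by
              refine Finset.sum_congr rfl fun i _ => ?_
              have h4 : Dcol j i = F (i, j) - Y (i, j) := by simp [hDcol, hD]
              rw [h4]; ring
          _ = 0 := hcol j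
      have hqv := hop _ horthcol
      nlinarith [norm_nonneg (Dcol j), norm_nonneg (matVec Q (Dcol j))]
    nlinarith [norm_nonneg (matAct Q D), mul_nonneg hq (norm_nonneg D)]
  calc Metric.infDist (matAct Q F) M ≤ dist (matAct Q F) (matAct Q Y) :=
        Metric.infDist_le_dist_of_mem hQYmem
    _ = ‖matAct Q F - matAct Q Y‖ := dist_eq_norm _ _
    _ = ‖matAct Q (F - Y)‖ := by rw [hlin]
    _ ≤ q * ‖F - Y‖ := hbound
    _ = q * Metric.infDist F M := by rw [hdist_eq]
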